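/- Suppose the realized public ratings are such that neither event B4 nor event B5 occurs. Then for all ranks i ≠ j, writing x = r^M_{m_i} − r^M_{m_j} and y = r^W_{w_i} − r^W_{w_j}: if |x| ≤ 2L or |y| ≤ 2L, then |x − y| < 2L. -/

import Mathlib

noncomputable section

/-- 0-indexed rank: the number of agents with strictly larger rating. -/
def rankOf {n : ℕ} (r : Fin n → ℝ) (a : Fin n) : ℕ :=
  (Finset.univ.filter fun b => r a < r b).card

/-- Number of agents whose rating lies in the closed interval with endpoints `s` and `t`. -/
def countBetween {n : ℕ} (r : Fin n → ℝ) (s t : ℝ) : ℕ :=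
  (Finset.univ.filter fun m => min s t ≤ r m ∧ r m ≤ max s t).card

/-- Event B4 (see the paper): some pair of ranks `i ≠ j` whose rating-difference and
interval-count behave atypically. -/
def EventB4 (n : ℕ) (L : ℝ) (rM rW : Fin n → ℝ) : Prop :=
  ∃ a a' b b' : Fin n, a ≠ a' ∧
    rankOf rM a = rankOf rW b ∧ rankOf rM a' = rankOf rW b' ∧
    ((|rM a - rM a'| ≤ 4*L ∧
      ¬ (2 + |rM a - rM a'| * ((n:ℝ)-2) - L*((n:ℝ)-2) <
           (countBetween rM (rM a) (rM a') : ℝ) ∧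
         (countBetween rM (rM a) (rM a') : ℝ) <
           2 + |rM a - rM a'| * ((n:ℝ)-2) + L*((n:ℝ)-2))) ∨
     (|rW b - rW b'| ≤ 4*L ∧
      ¬ (2 + |rW b - rW b'| * ((n:ℝ)-2) - L*((n:ℝ)-2) <
           (countBetween rW (rW b) (rW b') : ℝ) ∧
         (countBetween rW (rW b) (rW b') : ℝ) <
           2 + |rW b - rW b'| * ((n:ℝ)-2) + L*((n:ℝ)-2))))

/-- Event B5 (see the paper). -/
def EventB5 (n : ℕ) (L : ℝ) (rM rW : Fin n → ℝ) : Prop :=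
  ∃ a a' b b' : Fin n, a ≠ a' ∧
    rankOf rM a = rankOf rW b ∧ rankOf rM a' = rankOf rW b' ∧
    ((4*L < |rW b - rW b'| ∧
        (countBetween rW (rW b) (rW b') : ℝ) ≤ 2 + 3*L*((n:ℝ)-2)) ∨
     (4*L < |rM a - rM a'| ∧
        (countBetween rM (rM a) (rM a') : ℝ) ≤ 2 + 3*L*((n:ℝ)-2)))

/-!
Equal ranks force the two intervals to contain the same number `c` of ratings, and the two
differences `x`, `y` to have the same sign, so `|x - y| = ||x| - |y||`. Outside `B4` and `B5`, an
interval of length `u ≤ 4L` holds `c = 2 + u(n-2) ± L(n-2)` ratings and a longer one more than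
`2 + 3L(n-2)`. Hence if one of `|x|`, `|y|` is at most `2L`, the other is at most `4L`, and
comparing the two estimates of `c` gives `||x| - |y|| (n-2) < 2L(n-2)`.
-/

open Finset

section Rank

variable {n : ℕ} (r : Fin n → ℝ) {a a' : Fin n}

theorem rankOf_le_rankOf_of_le (h : r a ≤ r a') : rankOf r a' ≤ rankOf r a :=
  card_le_card fun _ ↦ by simpa using h.trans_lt

theorem rankOf_lt_rankOf_of_lt (h : r a < r a') : rankOf r a' < rankOf r a := by
  refine card_lt_card ⟨fun _ ↦ by simpa using h.trans, fun hsub ↦ ?_⟩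
  simpa using hsub (by simpa using h : a' ∈ univ.filter fun b ↦ r a < r b)

theorem rankOf_lt_rankOf_iff : rankOf r a' < rankOf r a ↔ r a < r a' :=
  ⟨fun h ↦ lt_of_not_ge fun h' ↦ (rankOf_le_rankOf_of_le r h').not_gt h,
    rankOf_lt_rankOf_of_lt r⟩

theorem countBetween_comm (s t : ℝ) : countBetween r s t = countBetween r t s := by
  simp only [countBetween, min_comm, max_comm]

variable {r}

theorem card_filter_le_eq_rankOf_add_one (hr : Function.Injective r) (a : Fin n) :
    #(univ.filter fun m ↦ r a ≤ r m) = rankOf r a + 1 := by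
  rw [rankOf, ← card_insert_of_notMem (s := univ.filter fun m ↦ r a < r m) (a := a) (by simp)]
  congr 1
  ext m
  simp [le_iff_eq_or_lt, hr.eq_iff, eq_comm]

theorem countBetween_add_rankOf (hr : Function.Injective r) (h : r a' ≤ r a) :
    countBetween r (r a) (r a') + rankOf r a = rankOf r a' + 1 := by
  have hsub : (univ.filter fun m ↦ r a < r m) ⊆ univ.filter fun m ↦ r a' ≤ r m :=
    fun _ ↦ by simpa using fun hm ↦ h.trans hm.le
  rw [← card_filter_le_eq_rankOf_add_one hr, ← card_sdiff_add_card_eq_card hsub, countBetween,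
    min_eq_right h, max_eq_left h, rankOf]
  congr 2
  ext m
  simp [not_lt]

end Rank

section TwoSides

variable {n : ℕ} {rM rW : Fin n → ℝ} {a a' b b' : Fin n}

theorem countBetween_eq_of_rankOf_eq (hrM : Function.Injective rM) (hrW : Function.Injective rW)
    (hb : rankOf rM a = rankOf rW b) (hb' : rankOf rM a' = rankOf rW b') :
    countBetween rM (rM a) (rM a') = countBetween rW (rW b) (rW b') := by
  wlog h : rM a' ≤ rM a generalizing a a' b b'
  · rw [countBetween_comm, countBetween_comm rW]
    exact this hb' hb (le_of_not_ge h)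
  have hW : rW b' ≤ rW b := by
    rw [← not_lt, ← rankOf_lt_rankOf_iff, ← hb, ← hb', rankOf_lt_rankOf_iff, not_lt]
    exact h
  have hcM := countBetween_add_rankOf hrM h
  have hcW := countBetween_add_rankOf hrW hW
  omega

theorem sub_pos_iff_of_rankOf_eq (hb : rankOf rM a = rankOf rW b)
    (hb' : rankOf rM a' = rankOf rW b') : 0 < rM a - rM a' ↔ 0 < rW b - rW b' := by
  rw [sub_pos, sub_pos, ← rankOf_lt_rankOf_iff, ← rankOf_lt_rankOf_iff, hb, hb']

end TwoSides

theorem mul_nonneg_of_pos_iff_pos {α : Type*} [Ring α] [LinearOrder α] [IsStrictOrderedRing α]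
    {x y : α} (h : 0 < x ↔ 0 < y) : 0 ≤ x * y := by
  by_cases hx : 0 < x
  · exact (mul_pos hx (h.1 hx)).le
  · exact mul_nonneg_of_nonpos_of_nonpos (not_lt.1 hx) (not_lt.1 (mt h.2 hx))

theorem abs_sub_eq_abs_abs_sub_abs {α : Type*} [CommRing α] [LinearOrder α] [IsStrictOrderedRing α]
    {x y : α} (h : 0 ≤ x * y) : |x - y| = |(|x| - |y|)| := by
  refine (sq_eq_sq₀ (abs_nonneg _) (abs_nonneg _)).1 ?_
  rw [sq_abs, sq_abs, sub_sq, sub_sq, sq_abs, sq_abs, mul_assoc, mul_assoc, ← abs_mul,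
    abs_of_nonneg h]

/-- The constraints that `¬ EventB4` and `¬ EventB5` put on two agents whose ratings differ by
`u` and whose closed rating interval holds `c` ratings; `N` stands for `n - 2`. -/
def TypicalCount (L N u c : ℝ) : Prop :=
  (u ≤ 4 * L → |c - (2 + u * N)| < L * N) ∧ (4 * L < u → 2 + 3 * L * N < c)

namespace TypicalCount

variable {L N u v c : ℝ}

theorem le_four_mul (hL : 0 ≤ L) (hN : 0 ≤ N) (hu : TypicalCount L N u c)
    (hv : TypicalCount L N v c) (h : u ≤ 2 * L) : v ≤ 4 * L := by
  by_contra! hv4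
  have hc := (abs_lt.1 (hu.1 (by linarith))).2
  have huN : u * N ≤ 2 * L * N := mul_le_mul_of_nonneg_right h hN
  linarith [hv.2 hv4]

theorem abs_sub_lt (hL : 0 ≤ L) (hN : 0 ≤ N) (hu : TypicalCount L N u c)
    (hv : TypicalCount L N v c) (h : u ≤ 2 * L ∨ v ≤ 2 * L) : |u - v| < 2 * L := by
  wlog hu2 : u ≤ 2 * L generalizing u v
  · rw [abs_sub_comm]
    exact this hv hu h.symm (h.resolve_left hu2)
  have hcu := hu.1 (by linarith)
  have hcv := hv.1 (hu.le_four_mul hL hN hv hu2)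
  have : |u - v| * N < 2 * L * N :=
    calc |u - v| * N = |(u - v) * N| := by rw [abs_mul, abs_of_nonneg hN]
      _ = |(c - (2 + v * N)) - (c - (2 + u * N))| := by ring_nf
      _ ≤ |c - (2 + v * N)| + |c - (2 + u * N)| := abs_sub _ _
      _ < 2 * L * N := by linarith
  exact lt_of_mul_lt_mul_right this hN

end TypicalCount

section Events

variable {n : ℕ} {L : ℝ} {rM rW : Fin n → ℝ} {a a' b b' : Fin n}

theorem typicalCount_men (h4 : ¬ EventB4 n L rM rW) (h5 : ¬ EventB5 n L rM rW) (hne : a ≠ a')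
    (hb : rankOf rM a = rankOf rW b) (hb' : rankOf rM a' = rankOf rW b') :
    TypicalCount L (n - 2) |rM a - rM a'| (countBetween rM (rM a) (rM a')) := by
  refine ⟨fun hu ↦ abs_sub_lt_iff.2 ?_, fun hu ↦ ?_⟩
  · by_contra hc
    exact h4 ⟨a, a', b, b', hne, hb, hb', Or.inl ⟨hu, fun h ↦ hc ⟨by linarith, by linarith⟩⟩⟩
  · by_contra! hc
    exact h5 ⟨a, a', b, b', hne, hb, hb', Or.inr ⟨hu, hc⟩⟩

theorem typicalCount_women (h4 : ¬ EventB4 n L rM rW) (h5 : ¬ EventB5 n L rM rW) (hne : a ≠ a')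
    (hb : rankOf rM a = rankOf rW b) (hb' : rankOf rM a' = rankOf rW b') :
    TypicalCount L (n - 2) |rW b - rW b'| (countBetween rW (rW b) (rW b')) := by
  refine ⟨fun hv ↦ abs_sub_lt_iff.2 ?_, fun hv ↦ ?_⟩
  · by_contra hc
    exact h4 ⟨a, a', b, b', hne, hb, hb', Or.inr ⟨hv, fun h ↦ hc ⟨by linarith, by linarith⟩⟩⟩
  · by_contra! hc
    exact h5 ⟨a, a', b, b', hne, hb, hb', Or.inl ⟨hv, hc⟩⟩

end Events

/-- If neither event B4 nor event B5 occurs, then for all ranks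
`i ≠ j`, writing `x = r_{m_i} − r_{m_j}` and `y = r_{w_i} − r_{w_j}`:
if `|x| ≤ 2L` or `|y| ≤ 2L`, then `|x − y| < 2L`. -/
theorem stmt13 (n : ℕ) (L : ℝ) (hL : 0 < L) (rM rW : Fin n → ℝ)
    (hrM : Function.Injective rM) (hrW : Function.Injective rW)
    (h4 : ¬ EventB4 n L rM rW) (h5 : ¬ EventB5 n L rM rW) :
    ∀ a a' b b' : Fin n, a ≠ a' →
      rankOf rM a = rankOf rW b → rankOf rM a' = rankOf rW b' →
      (|rM a - rM a'| ≤ 2*L ∨ |rW b - rW b'| ≤ 2*L) →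
      |(rM a - rM a') - (rW b - rW b')| < 2*L := by
  intro a a' b b' hne hb hb' hclose
  have hN : (0 : ℝ) ≤ n - 2 := by
    have : 1 < n := by simpa using Fintype.one_lt_card_iff.2 ⟨a, a', hne⟩
    rw [sub_nonneg]
    exact_mod_cast this
  have hM := typicalCount_men h4 h5 hne hb hb'
  rw [countBetween_eq_of_rankOf_eq hrM hrW hb hb'] at hM
  rw [abs_sub_eq_abs_abs_sub_abs (mul_nonneg_of_pos_iff_pos (sub_pos_iff_of_rankOf_eq hb hb'))]
  exact hM.abs_sub_lt hL.le hN (typicalCount_women h4 h5 hne hb hb') hclose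

end
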